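/- In a one-dimensional ISAC network with K nodes and nonempty sensing link set U(A), the sensing–throughput region is exactly R = {(s, f) : 0 ≤ f ≤ c_min and 0 ≤ s ≤ Σ_{u ∈ U(A)} c_u − |U(A)| · f}, where c_min := min_{1 ≤ j ≤ K−1} c_{{j,j+1}}. -/

import Mathlib

/-! Flow conservation along the path makes the net flow `f(j, j+1) - f(j+1, j)` across every
link equal to the throughput `F`, so every link spends at least `F` of its capacity on
communication: hence `F ≤ c_min`, and the two directions of a link `u` carry at most `c_u - F`
of sensing. Conversely, sending `F` forward on every link and spending the same fraction
`s / Σ_{u ∈ U(A)} (c_u - F)` of each leftover capacity `c_u - F` on sensing achieves `(s, F)`. -/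

/-- An ISAC network on a finite node type `V`: a symmetric, irreflexive set of
directed links `E`, a source `Tx`, a sink `Rx`, a nonnegative capacity `c` on
undirected links (unordered pairs), and a sensing region `A`. -/
structure ISACNetwork (V : Type) [Fintype V] [DecidableEq V] where
  E : Finset (V × V)
  symm : ∀ i j : V, (i, j) ∈ E → (j, i) ∈ E
  irrefl : ∀ i : V, (i, i) ∉ E
  Tx : V
  Rx : V
  TxNeRx : Tx ≠ Rx
  c : Sym2 V → ℝ
  c_nonneg : ∀ u : Sym2 V, 0 ≤ c u
  A : Finset V

namespace ISACNetwork

variable {V : Type} [Fintype V] [DecidableEq V]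

/-- `E(A)`: directed links with both endpoints in the sensing region. -/
def EA (N : ISACNetwork V) : Finset (V × V) :=
  N.E.filter fun e => e.1 ∈ N.A ∧ e.2 ∈ N.A

/-- `U(A)`: undirected links with both endpoints in the sensing region. -/
def UA (N : ISACNetwork V) : Finset (Sym2 V) :=
  N.EA.image Sym2.mk.uncurry

/-- A valid assignment of communication rates `f` and sensing rates `s`:
nonnegative rates for which there is a nonnegative capacity split `ca` of the
undirected link capacities with `f e + s e ≤ ca e` on each directed link, no
communication into the source or out of the sink, and flow conservation at
every intermediate node. -/
def Valid (N : ISACNetwork V) (f s : V × V → ℝ) : Prop :=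
  (∀ e ∈ N.E, 0 ≤ f e) ∧ (∀ e ∈ N.E, 0 ≤ s e) ∧
  ∃ ca : V × V → ℝ,
    (∀ e ∈ N.E, 0 ≤ ca e) ∧
    (∀ i j : V, (i, j) ∈ N.E → ca (i, j) + ca (j, i) = N.c (Sym2.mk i j)) ∧
    (∀ e ∈ N.E, f e + s e ≤ ca e) ∧
    (∀ i : V, (i, N.Tx) ∈ N.E → f (i, N.Tx) = 0) ∧
    (∀ j : V, (N.Rx, j) ∈ N.E → f (N.Rx, j) = 0) ∧
    (∀ j : V, j ≠ N.Tx → j ≠ N.Rx →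
      ∑ i ∈ Finset.univ.filter (fun i => (i, j) ∈ N.E), f (i, j)
        = ∑ k ∈ Finset.univ.filter (fun k => (j, k) ∈ N.E), f (j, k))

/-- The sensing fidelity achieved by a sensing-rate assignment. -/
def sensOf (N : ISACNetwork V) (s : V × V → ℝ) : ℝ := ∑ e ∈ N.EA, s e

/-- The throughput achieved by a communication-rate assignment. -/
def flowOf (N : ISACNetwork V) (f : V × V → ℝ) : ℝ :=
  ∑ j ∈ Finset.univ.filter (fun j => (N.Tx, j) ∈ N.E), f (N.Tx, j)

/-- The sensing–throughput region: all pairs `(s, f)` achieved by a valid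
assignment. -/
def Region (N : ISACNetwork V) : Set (ℝ × ℝ) :=
  { p | ∃ fr sr : V × V → ℝ, N.Valid fr sr ∧ N.sensOf sr = p.1 ∧ N.flowOf fr = p.2 }

end ISACNetwork

/-- The one-dimensional ISAC network with `K ≥ 2` nodes: nodes `0, …, K-1`
(standing for `1, …, K`), links between consecutive nodes in both directions,
source node `0` and sink node `K-1`. -/
def pathNetwork (K : ℕ) (hK : 2 ≤ K) (cap : Sym2 (Fin K) → ℝ)
    (hcap : ∀ u, 0 ≤ cap u) (A : Finset (Fin K)) : ISACNetwork (Fin K) where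
  E := Finset.univ.filter fun e : Fin K × Fin K =>
    e.1.val + 1 = e.2.val ∨ e.2.val + 1 = e.1.val
  symm := by
    intro i j h
    simp only [Finset.mem_filter, Finset.mem_univ, true_and] at h ⊢
    tauto
  irrefl := by
    intro i h
    simp only [Finset.mem_filter, Finset.mem_univ, true_and] at h
    omega
  Tx := ⟨0, by omega⟩
  Rx := ⟨K - 1, by omega⟩
  TxNeRx := by
    rw [Fin.ne_iff_vne]
    simp only [ne_eq]
    omega
  c := cap
  c_nonneg := hcap
  A := A

/-- `c_min`: the smallest undirected link capacity of the one-dimensional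
ISAC network, `min_{1 ≤ j ≤ K-1} c_{{j,j+1}}`. -/
noncomputable def cmin (K : ℕ) (hK : 2 ≤ K) (cap : Sym2 (Fin K) → ℝ) : ℝ :=
  (Finset.univ : Finset (Fin (K - 1))).inf'
    (Finset.univ_nonempty_iff.mpr ⟨⟨0, by omega⟩⟩)
    (fun j => cap (Sym2.mk ⟨j.val, by have := j.isLt; omega⟩
      ⟨j.val + 1, by have := j.isLt; omega⟩))

namespace ISACNetwork

variable {V : Type} [Fintype V] [DecidableEq V] {N : ISACNetwork V}

lemma mem_E_of_mem_EA {e : V × V} (he : e ∈ N.EA) : e ∈ N.E :=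
  (Finset.mem_filter.mp he).1

lemma swap_mem_EA {e : V × V} (he : e ∈ N.EA) : e.swap ∈ N.EA := by
  simp only [EA, Finset.mem_filter] at he ⊢
  exact ⟨N.symm _ _ he.1, he.2.2, he.2.1⟩

def IsOrientation (N : ISACNetwork V) (p : V × V → Prop) : Prop :=
  ∀ e ∈ N.E, p e.swap ↔ ¬ p e

namespace IsOrientation

variable {p : V × V → Prop} [DecidablePred p]

lemma sum_EA (hp : N.IsOrientation p) (g : V × V → ℝ) :
    ∑ e ∈ N.EA, g e = ∑ e ∈ N.EA.filter p, (g e + g e.swap) := by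
  rw [Finset.sum_add_distrib, ← Finset.sum_filter_add_sum_filter_not N.EA p g]
  congr 1
  refine Finset.sum_nbij' Prod.swap Prod.swap ?_ ?_ (fun _ _ => rfl) (fun _ _ => rfl)
    (fun _ _ => rfl) <;>
  · intro e he
    obtain ⟨heA, hpe⟩ := Finset.mem_filter.mp he
    have hswap := hp e (mem_E_of_mem_EA heA)
    exact Finset.mem_filter.mpr ⟨swap_mem_EA heA, by tauto⟩

lemma UA_eq (hp : N.IsOrientation p) : N.UA = (N.EA.filter p).image Sym2.mk.uncurry := by
  refine le_antisymm (fun u hu => ?_) (Finset.image_subset_image (Finset.filter_subset _ _))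
  obtain ⟨e, heA, rfl⟩ := Finset.mem_image.mp hu
  by_cases hpe : p e
  · exact Finset.mem_image_of_mem _ (Finset.mem_filter.mpr ⟨heA, hpe⟩)
  · refine Finset.mem_image.mpr ⟨e.swap, Finset.mem_filter.mpr ⟨swap_mem_EA heA, ?_⟩, ?_⟩
    · exact (hp e (mem_E_of_mem_EA heA)).mpr hpe
    · exact Sym2.eq_swap

lemma injOn (hp : N.IsOrientation p) :
    Set.InjOn Sym2.mk.uncurry (N.EA.filter p : Set (V × V)) := by
  intro a ha b hb hab
  obtain ⟨haA, hpa⟩ := Finset.mem_filter.mp ha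
  obtain ⟨hbA, hpb⟩ := Finset.mem_filter.mp hb
  rcases Sym2.mk_eq_mk_iff.mp hab with h | rfl
  · exact h
  · exact absurd hpb ((hp b (mem_E_of_mem_EA hbA)).mp hpa)

lemma sum_UA (hp : N.IsOrientation p) (g : Sym2 V → ℝ) :
    ∑ u ∈ N.UA, g u = ∑ e ∈ N.EA.filter p, g (Sym2.mk e.1 e.2) := by
  rw [hp.UA_eq, Finset.sum_image hp.injOn]
  rfl

lemma sensOf_ite (hp : N.IsOrientation p) (g : Sym2 V → ℝ) :
    N.sensOf (fun e => if p e then g (Sym2.mk e.1 e.2) else 0) = ∑ u ∈ N.UA, g u := by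
  rw [sensOf, hp.sum_EA, hp.sum_UA]
  refine Finset.sum_congr rfl fun e he => ?_
  obtain ⟨heA, hpe⟩ := Finset.mem_filter.mp he
  rw [if_pos hpe, if_neg fun h => (hp e (mem_E_of_mem_EA heA)).mp h hpe, add_zero]

end IsOrientation

namespace Valid

variable {f s : V × V → ℝ}

lemma flowOf_nonneg (hv : N.Valid f s) : 0 ≤ N.flowOf f :=
  Finset.sum_nonneg fun _ hj => hv.1 _ (Finset.mem_filter.mp hj).2

lemma sensOf_nonneg (hv : N.Valid f s) : 0 ≤ N.sensOf s :=
  Finset.sum_nonneg fun _ he => hv.2.1 _ (mem_E_of_mem_EA he)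

lemma link_budget (hv : N.Valid f s) {e : V × V} (he : e ∈ N.E) :
    f e + f e.swap + s e + s e.swap ≤ N.c (Sym2.mk e.1 e.2) := by
  obtain ⟨i, j⟩ := e
  obtain ⟨-, -, ca, -, hsplit, hfs, -⟩ := hv
  have := hsplit i j he
  have := hfs (i, j) he
  have := hfs (j, i) (N.symm _ _ he)
  simp only [Prod.swap_prod_mk]
  linarith

end Valid

end ISACNetwork

open ISACNetwork

section PathNetwork

variable {K : ℕ} {hK : 2 ≤ K} {cap : Sym2 (Fin K) → ℝ} {hcap : ∀ u, 0 ≤ cap u}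
  {A : Finset (Fin K)}

local notation "𝒫" => pathNetwork K hK cap hcap A

abbrev IsForwardLink (e : Fin K × Fin K) : Prop := e.1.val + 1 = e.2.val

lemma le_cmin_iff {x : ℝ} :
    x ≤ cmin K hK cap ↔ ∀ e : Fin K × Fin K, IsForwardLink e → x ≤ cap (Sym2.mk e.1 e.2) := by
  refine (Finset.le_inf'_iff _ _).trans
    ⟨fun h e he => ?_, fun h j _ => h (⟨j.val, by omega⟩, ⟨j.val + 1, by omega⟩) rfl⟩
  obtain ⟨⟨a, ha⟩, ⟨b, hb⟩⟩ := e
  obtain rfl : a + 1 = b := he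
  exact h ⟨a, by omega⟩ (Finset.mem_univ _)

lemma pathNetwork_mem_E {e : Fin K × Fin K} :
    e ∈ (𝒫).E ↔ e.1.val + 1 = e.2.val ∨ e.2.val + 1 = e.1.val := by
  simp [pathNetwork]

lemma pathNetwork_isOrientation : (𝒫).IsOrientation IsForwardLink := by
  rintro ⟨a, b⟩ he
  rw [pathNetwork_mem_E] at he
  dsimp only at he
  change b.val + 1 = a.val ↔ ¬ a.val + 1 = b.val
  omega

lemma pathNetwork_flowOf (f : Fin K × Fin K → ℝ) :
    (𝒫).flowOf f = f (⟨0, by omega⟩, ⟨1, by omega⟩) := by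
  have : Finset.univ.filter (fun j => ((𝒫).Tx, j) ∈ (𝒫).E) = {⟨1, by omega⟩} := by
    ext j
    simp only [Finset.mem_filter, Finset.mem_univ, true_and, pathNetwork_mem_E,
      Finset.mem_singleton, Fin.ext_iff]
    change 0 + 1 = j.val ∨ j.val + 1 = 0 ↔ _
    omega
  rw [flowOf, this, Finset.sum_singleton]
  rfl

lemma pathNetwork_in_neighbors (n : ℕ) (h : n + 2 < K) :
    Finset.univ.filter (fun i => (i, ⟨n + 1, by omega⟩) ∈ (𝒫).E)
      = {⟨n, by omega⟩, ⟨n + 2, h⟩} := by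
  ext i
  simp only [Finset.mem_filter, Finset.mem_univ, true_and, pathNetwork_mem_E,
    Finset.mem_insert, Finset.mem_singleton, Fin.ext_iff]
  omega

lemma pathNetwork_out_neighbors (n : ℕ) (h : n + 2 < K) :
    Finset.univ.filter (fun k => (⟨n + 1, by omega⟩, k) ∈ (𝒫).E)
      = {⟨n, by omega⟩, ⟨n + 2, h⟩} := by
  ext i
  simp only [Finset.mem_filter, Finset.mem_univ, true_and, pathNetwork_mem_E,
    Finset.mem_insert, Finset.mem_singleton, Fin.ext_iff]
  omega

lemma pathNetwork_interior {j : Fin K} (hT : j ≠ (𝒫).Tx) (hR : j ≠ (𝒫).Rx) :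
    ∃ n, ∃ h : n + 2 < K, j = ⟨n + 1, by omega⟩ := by
  rcases j with ⟨_ | n, hj⟩
  · exact absurd rfl hT
  · refine ⟨n, ?_, rfl⟩
    have := Fin.val_ne_of_ne hR
    change n + 1 ≠ K - 1 at this
    omega

lemma ISACNetwork.Valid.pathNetwork_netFlow {f s : Fin K × Fin K → ℝ} (hv : (𝒫).Valid f s)
    (n : ℕ) (h : n + 1 < K) :
    f (⟨n, by omega⟩, ⟨n + 1, h⟩) - f (⟨n + 1, h⟩, ⟨n, by omega⟩) = (𝒫).flowOf f := by
  obtain ⟨-, -, -, -, -, -, hTx, -, hcons⟩ := hv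
  induction n with
  | zero =>
    have : f (⟨1, h⟩, ⟨0, by omega⟩) = 0 := hTx _ (pathNetwork_mem_E.mpr (Or.inr rfl))
    rw [pathNetwork_flowOf, this, sub_zero]
  | succ n ih =>
    have hcons_n := hcons ⟨n + 1, by omega⟩ (Fin.ne_of_val_ne (by change n + 1 ≠ 0; omega))
      (Fin.ne_of_val_ne (by change n + 1 ≠ K - 1; omega))
    have hne : (⟨n, by omega⟩ : Fin K) ≠ ⟨n + 2, h⟩ := Fin.ne_of_val_ne (by simp)
    rw [pathNetwork_in_neighbors n h, pathNetwork_out_neighbors n h, Finset.sum_pair hne,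
      Finset.sum_pair hne] at hcons_n
    linarith [ih (by omega)]

lemma ISACNetwork.Valid.pathNetwork_netFlow_of_isForwardLink {f s : Fin K × Fin K → ℝ}
    (hv : (𝒫).Valid f s) {e : Fin K × Fin K} (he : IsForwardLink e) :
    f e - f e.swap = (𝒫).flowOf f := by
  obtain ⟨⟨a, ha⟩, ⟨b, hb⟩⟩ := e
  obtain rfl : a + 1 = b := he
  exact hv.pathNetwork_netFlow a hb

lemma pathNetwork_valid_forward {F t : ℝ} (hF0 : 0 ≤ F) (hF : F ≤ cmin K hK cap) (ht0 : 0 ≤ t)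
    (ht1 : t ≤ 1) :
    (𝒫).Valid (fun e => if IsForwardLink e then F else 0)
      (fun e => if IsForwardLink e then t * (cap (Sym2.mk e.1 e.2) - F) else 0) := by
  have hcapF := le_cmin_iff.mp hF
  refine ⟨fun e _ => ?_, fun e _ => ?_,
    fun e => if IsForwardLink e then cap (Sym2.mk e.1 e.2) else 0,
    fun e _ => ?_, fun i j hij => ?_, fun e _ => ?_, fun i _ => ?_, fun j _ => ?_,
    fun j hT hR => ?_⟩
  all_goals dsimp only [IsForwardLink]
  · split_ifs <;> [exact hF0; rfl]
  · split_ifs with he <;> [exact mul_nonneg ht0 (sub_nonneg.mpr (hcapF e he)); rfl]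
  · split_ifs <;> [exact hcap _; rfl]
  · rcases pathNetwork_mem_E.mp hij with (h : i.val + 1 = j.val) | (h : j.val + 1 = i.val)
    · rw [if_pos h, if_neg (by omega), add_zero]
      rfl
    · rw [if_neg (by omega), if_pos h, zero_add, Sym2.eq_swap]
      rfl
  · split_ifs with he
    · nlinarith [mul_nonneg (sub_nonneg.mpr ht1) (sub_nonneg.mpr (hcapF e he))]
    · simp
  · exact if_neg (by change ¬ (i.val + 1 = 0); omega)
  · exact if_neg (by change ¬ (K - 1 + 1 = j.val); omega)
  · obtain ⟨n, h, rfl⟩ := pathNetwork_interior hT hR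
    have hne : (⟨n, by omega⟩ : Fin K) ≠ ⟨n + 2, h⟩ := Fin.ne_of_val_ne (by simp)
    rw [pathNetwork_in_neighbors n h, pathNetwork_out_neighbors n h, Finset.sum_pair hne,
      Finset.sum_pair hne]
    simp [show n + 1 + 1 ≠ n by omega]

theorem pathNetwork_region_subset :
    (𝒫).Region ⊆ { p : ℝ × ℝ | 0 ≤ p.2 ∧ p.2 ≤ cmin K hK cap ∧ 0 ≤ p.1 ∧
      p.1 ≤ ∑ u ∈ (𝒫).UA, cap u - ((𝒫).UA.card : ℝ) * p.2 } := by
  rintro ⟨σ, F⟩ ⟨f, s, hv, rfl, rfl⟩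
  have hfwd_mem : ∀ e, IsForwardLink e → e ∈ (𝒫).E :=
    fun e he => pathNetwork_mem_E.mpr (Or.inl he)
  have hswap_mem : ∀ e, IsForwardLink e → e.swap ∈ (𝒫).E :=
    fun e he => (𝒫).symm _ _ (hfwd_mem e he)
  have hsens : ∀ e, IsForwardLink e → s e + s e.swap ≤ cap (Sym2.mk e.1 e.2) - (𝒫).flowOf f :=
    fun e he => by
      have hbudget : _ ≤ cap _ := hv.link_budget (hfwd_mem e he)
      linarith [hv.pathNetwork_netFlow_of_isForwardLink he, hv.1 _ (hswap_mem e he)]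
  refine ⟨hv.flowOf_nonneg, le_cmin_iff.mpr fun e he => ?_, hv.sensOf_nonneg, ?_⟩
  · linarith [hsens e he, hv.2.1 _ (hfwd_mem e he), hv.2.1 _ (hswap_mem e he)]
  · rw [← nsmul_eq_mul, ← Finset.sum_const, ← Finset.sum_sub_distrib, sensOf,
      pathNetwork_isOrientation.sum_EA, pathNetwork_isOrientation.sum_UA]
    exact Finset.sum_le_sum fun e he => hsens e (Finset.mem_filter.mp he).2

theorem pathNetwork_subset_region :
    { p : ℝ × ℝ | 0 ≤ p.2 ∧ p.2 ≤ cmin K hK cap ∧ 0 ≤ p.1 ∧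
      p.1 ≤ ∑ u ∈ (𝒫).UA, cap u - ((𝒫).UA.card : ℝ) * p.2 } ⊆ (𝒫).Region := by
  intro p ⟨hF0, hF, hσ0, hσ⟩
  rw [← nsmul_eq_mul, ← Finset.sum_const, ← Finset.sum_sub_distrib] at hσ
  set S := ∑ u ∈ (𝒫).UA, (cap u - p.2)
  have hS0 : 0 ≤ S := hσ0.trans hσ
  refine ⟨_, _,
    pathNetwork_valid_forward hF0 hF (div_nonneg hσ0 hS0) (div_le_one_of_le₀ hσ hS0),
    (pathNetwork_isOrientation.sensOf_ite fun u => p.1 / S * (cap u - p.2)).trans ?_,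
    (pathNetwork_flowOf _).trans (if_pos rfl)⟩
  rw [← Finset.mul_sum]
  rcases hS0.eq_or_lt with hS | hS
  · rw [← hS, div_zero, zero_mul]
    linarith
  · exact div_mul_cancel₀ p.1 hS.ne'

end PathNetwork

theorem oneD_region_general {K : ℕ} (hK : 2 ≤ K) (cap : Sym2 (Fin K) → ℝ)
    (hcap : ∀ u, 0 ≤ cap u) (A : Finset (Fin K)) :
    (pathNetwork K hK cap hcap A).Region =
      { p : ℝ × ℝ | 0 ≤ p.2 ∧ p.2 ≤ cmin K hK cap ∧ 0 ≤ p.1 ∧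
          p.1 ≤ ∑ u ∈ (pathNetwork K hK cap hcap A).UA, cap u
            - ((pathNetwork K hK cap hcap A).UA.card : ℝ) * p.2 } :=
  pathNetwork_region_subset.antisymm pathNetwork_subset_region

/-- The sensing–throughput region of a one-dimensional ISAC network with
nonempty sensing link set `U(A)` is exactly
`{(s, f) : 0 ≤ f ≤ c_min, 0 ≤ s ≤ Σ_{u ∈ U(A)} c_u − |U(A)| · f}`. -/
theorem oneD_region {K : ℕ} (hK : 2 ≤ K) (cap : Sym2 (Fin K) → ℝ)
    (hcap : ∀ u, 0 ≤ cap u) (A : Finset (Fin K))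
    (hUA : (pathNetwork K hK cap hcap A).UA.Nonempty) :
    (pathNetwork K hK cap hcap A).Region =
      { p : ℝ × ℝ | 0 ≤ p.2 ∧ p.2 ≤ cmin K hK cap ∧ 0 ≤ p.1 ∧
          p.1 ≤ ∑ u ∈ (pathNetwork K hK cap hcap A).UA, cap u
            - ((pathNetwork K hK cap hcap A).UA.card : ℝ) * p.2 } :=
  oneD_region_general hK cap hcap A
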